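/- For every n ∈ ℕ, the map sending y ∈ F to the vector (y_{1,2}, y_{3,4}, …, y_{2n-1,2n}) ∈ {0,1}^n is a bijection from F onto {0,1}^n; in particular, the face F has exactly 2^n elements. -/

import Mathlib

/-- `y ∈ LOP m`: `y` is the characteristic vector of a linear order (permutation `π`)
on `{1, …, m}`, with coordinates `y i j` for `1 ≤ i < j ≤ m` equal to `1` iff `π i < π j`;
coordinates outside the index range are normalized to `0`. -/
def LOP (m : ℕ) : Set (ℕ → ℕ → ℝ) :=
  {y | (∀ i j, ¬(1 ≤ i ∧ i < j ∧ j ≤ m) → y i j = 0) ∧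
    ∃ π : ℕ → ℕ, Set.BijOn π (Set.Icc 1 m) (Set.Icc 1 m) ∧
      ∀ i j, 1 ≤ i → i < j → j ≤ m → y i j = if π i < π j then (1 : ℝ) else 0}

/-- The face `F ⊆ LOP (2n)` cut out by the supporting hyperplanes
`y_{2i,2j-1} = 0`, `y_{2i-1,2i} + y_{2i,2j} - y_{2i-1,2j} = 0` and
`y_{2i-1,2j-1} + y_{2j-1,2j} - y_{2i-1,2j} = 0` for all `1 ≤ i < j ≤ n`. -/
def FaceF (n : ℕ) : Set (ℕ → ℕ → ℝ) :=
  {y | y ∈ LOP (2 * n) ∧ ∀ i j, 1 ≤ i → i < j → j ≤ n →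
    y (2 * i) (2 * j - 1) = 0 ∧
    y (2 * i - 1) (2 * i) + y (2 * i) (2 * j) - y (2 * i - 1) (2 * j) = 0 ∧
    y (2 * i - 1) (2 * j - 1) + y (2 * j - 1) (2 * j) - y (2 * i - 1) (2 * j) = 0}

/-- The 0/1 cube `{0,1}^n`, as vectors `ℕ → ℝ` normalized to `0` outside `{1,…,n}`. -/
def cube01 (n : ℕ) : Set (ℕ → ℝ) :=
  {x | (∀ i, ¬(1 ≤ i ∧ i ≤ n) → x i = 0) ∧ ∀ i, 1 ≤ i → i ≤ n → x i = 0 ∨ x i = 1}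

/-- The map sending `y` to `(y 1 2, y 3 4, …, y (2n-1) (2n))`. -/
def diagMap (n : ℕ) (y : ℕ → ℕ → ℝ) : ℕ → ℝ := fun i =>
  if 1 ≤ i ∧ i ≤ n then y (2 * i - 1) (2 * i) else 0

/-! A point of `F` is a linear order in which, for blocks `i < j`, the element `2j-1` precedes
`2i`. Given the orientations of the blocks `{2i-1, 2i}` and `{2j-1, 2j}`, the two equations of
`F` fix the three remaining comparisons between them, except when both blocks are reversed, where
transitivity through `2i-1 ≻ 2i ≻ 2j-1` does it; so a point of `F` is determined by its diagonal.
Conversely every orientation pattern is realized by an explicit order, and the patterns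
correspond to the subsets of `{1, …, n}`. -/

theorem exists_bijOn_Icc_lt_iff_lt {α : Type*} [LinearOrder α] {m : ℕ} {f : ℕ → α}
    (hf : Set.InjOn f (Set.Icc 1 m)) :
    ∃ π : ℕ → ℕ, Set.BijOn π (Set.Icc 1 m) (Set.Icc 1 m) ∧
      ∀ p ∈ Set.Icc 1 m, ∀ q ∈ Set.Icc 1 m, π p < π q ↔ f p < f q := by
  classical
  let π : ℕ → ℕ := fun a => ((Finset.Icc 1 m).filter (fun c => f c ≤ f a)).card
  have strictMono : ∀ q ∈ Set.Icc 1 m, ∀ {p}, f p < f q → π p < π q := by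
    intro q hq p hpq
    refine Finset.card_lt_card (Finset.ssubset_iff_of_subset ?_ |>.mpr ⟨q, ?_, ?_⟩)
    · exact Finset.monotone_filter_right _ fun c _ hc => hc.trans hpq.le
    · simpa using hq
    · exact fun h => (Finset.mem_filter.mp h).2.not_gt hpq
  have lt_iff : ∀ p ∈ Set.Icc 1 m, ∀ q ∈ Set.Icc 1 m, π p < π q ↔ f p < f q := by
    refine fun p hp q hq => ⟨fun h => ?_, strictMono q hq⟩
    rcases lt_trichotomy (f p) (f q) with hlt | heq | hgt
    · exact hlt
    · exact absurd (congrArg π (hf hp hq heq)) h.ne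
    · exact absurd (strictMono p hp hgt) h.not_gt
  have mapsTo : Set.MapsTo π (Set.Icc 1 m) (Set.Icc 1 m) := by
    intro a ha
    refine ⟨Finset.card_pos.mpr ⟨a, by simpa using ha⟩, ?_⟩
    simpa using Finset.card_filter_le (Finset.Icc 1 m) _
  have injOn : Set.InjOn π (Set.Icc 1 m) := by
    intro p hp q hq h
    by_contra hne
    rcases (hf.ne_iff hp hq).mpr hne |>.lt_or_gt with hlt | hgt
    · exact ((lt_iff p hp q hq).mpr hlt).ne h
    · exact ((lt_iff q hq p hp).mpr hgt).ne h.symm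
  exact ⟨π, ((Set.finite_Icc 1 m).injOn_iff_bijOn_of_mapsTo mapsTo).mp injOn, lt_iff⟩

noncomputable def orderVector {α : Type*} [LinearOrder α] (m : ℕ) (f : ℕ → α) :
    ℕ → ℕ → ℝ := fun p q =>
  if 1 ≤ p ∧ p < q ∧ q ≤ m then (if f p < f q then 1 else 0) else 0

theorem orderVector_of_lt {α : Type*} [LinearOrder α] {m p q : ℕ} (f : ℕ → α) (hp : 1 ≤ p)
    (hpq : p < q) (hq : q ≤ m) : orderVector m f p q = if f p < f q then 1 else 0 :=
  if_pos ⟨hp, hpq, hq⟩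

theorem orderVector_mem_LOP {α : Type*} [LinearOrder α] {m : ℕ} {f : ℕ → α}
    (hf : Set.InjOn f (Set.Icc 1 m)) : orderVector m f ∈ LOP m := by
  obtain ⟨π, hπ, hlt⟩ := exists_bijOn_Icc_lt_iff_lt hf
  refine ⟨fun p q h => if_neg h, π, hπ, fun p q hp hpq hq => ?_⟩
  simp only [orderVector_of_lt f hp hpq hq, hlt p ⟨hp, by omega⟩ q ⟨by omega, hq⟩]

namespace LOP

variable {m p q r : ℕ} {y : ℕ → ℕ → ℝ}

theorem eq_zero_or_eq_one (hy : y ∈ LOP m) (hp : 1 ≤ p) (hpq : p < q) (hq : q ≤ m) :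
    y p q = 0 ∨ y p q = 1 := by
  obtain ⟨_, π, _, hπ⟩ := hy
  rw [hπ p q hp hpq hq]
  split_ifs <;> simp

theorem nonneg (hy : y ∈ LOP m) (hp : 1 ≤ p) (hpq : p < q) (hq : q ≤ m) : 0 ≤ y p q := by
  rcases eq_zero_or_eq_one hy hp hpq hq with h | h <;> simp [h]

theorem le_add (hy : y ∈ LOP m) (hp : 1 ≤ p) (hpq : p < q) (hqr : q < r) (hr : r ≤ m) :
    y p r ≤ y p q + y q r := by
  obtain ⟨_, π, _, hπ⟩ := hy
  rw [hπ p q hp hpq (by omega), hπ q r (by omega) hqr hr, hπ p r hp (by omega) hr]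
  split_ifs <;> norm_num
  omega

end LOP

theorem exists_block_index {n p : ℕ} (hp : 1 ≤ p) (hpn : p ≤ 2 * n) :
    ∃ i, 1 ≤ i ∧ i ≤ n ∧ (p = 2 * i - 1 ∨ p = 2 * i) :=
  ⟨(p + 1) / 2, by omega, by omega, by omega⟩

/-- Ranks, in the order realizing the diagonal pattern `b` on `F`: first the elements `2i-1`
with `b i`, then the blocks `{2i-1, 2i}` with `¬ b i` (each listed as `2i, 2i-1`), then the
elements `2i` with `b i`; inside each group the blocks come in decreasing order of `i`. -/
def pairKey (n : ℕ) (b : ℕ → Bool) (p : ℕ) : ℕ :=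
  let i := (p + 1) / 2
  if p % 2 = 1 then (if b i then n - i else n + 2 * (n - i) + 1)
  else (if b i then 3 * n + (n - i) else n + 2 * (n - i))

section pairKey

variable {n i : ℕ} {b : ℕ → Bool}

theorem pairKey_odd (hi : 1 ≤ i) :
    pairKey n b (2 * i - 1) = if b i then n - i else n + 2 * (n - i) + 1 := by
  rw [pairKey, if_pos (by omega), show (2 * i - 1 + 1) / 2 = i by omega]

theorem pairKey_even :
    pairKey n b (2 * i) = if b i then 3 * n + (n - i) else n + 2 * (n - i) := by
  rw [pairKey, if_neg (by omega), show (2 * i + 1) / 2 = i by omega]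

theorem pairKey_injOn : Set.InjOn (pairKey n b) (Set.Icc 1 (2 * n)) := by
  intro p ⟨hp, hpn⟩ q ⟨hq, hqn⟩ h
  obtain ⟨i, hi, hin, rfl | rfl⟩ := exists_block_index hp hpn <;>
  obtain ⟨j, hj, hjn, rfl | rfl⟩ := exists_block_index hq hqn <;>
  simp only [pairKey_odd, pairKey_even, hi, hj] at h <;>
  cases hbi : b i <;> cases hbj : b j <;>
    simp only [hbi, hbj, if_true, if_false, Bool.false_eq_true] at h <;> omega

end pairKey

noncomputable def faceVector (n : ℕ) (b : ℕ → Bool) : ℕ → ℕ → ℝ :=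
  orderVector (2 * n) (pairKey n b)

theorem faceVector_mem_FaceF (n : ℕ) (b : ℕ → Bool) : faceVector n b ∈ FaceF n := by
  refine ⟨orderVector_mem_LOP pairKey_injOn, fun i j hi hij hjn => ?_⟩
  simp (disch := omega) only [faceVector, orderVector_of_lt, pairKey_odd, pairKey_even]
  cases b i <;> cases b j <;> simp only [if_true, if_false, Bool.false_eq_true] <;>
    split_ifs <;> first | omega | norm_num

theorem diagMap_faceVector {n i : ℕ} (b : ℕ → Bool) (hi : 1 ≤ i) (hin : i ≤ n) :
    diagMap n (faceVector n b) i = if b i then 1 else 0 := by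
  simp (disch := omega) only [diagMap, if_pos (And.intro hi hin), faceVector, orderVector_of_lt,
    pairKey_odd, pairKey_even]
  cases b i <;> simp only [if_true, if_false, Bool.false_eq_true] <;> split_ifs <;>
    first | rfl | (exfalso; omega)

namespace FaceF

variable {n i j : ℕ} {y : ℕ → ℕ → ℝ}

theorem cross_eq (hy : y ∈ FaceF n) (hi : 1 ≤ i) (hij : i < j) (hjn : j ≤ n) :
    y (2 * i) (2 * j) = (1 - y (2 * i - 1) (2 * i)) * y (2 * j - 1) (2 * j) ∧
    y (2 * i - 1) (2 * j) = y (2 * i - 1) (2 * i) + y (2 * j - 1) (2 * j)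
      - y (2 * i - 1) (2 * i) * y (2 * j - 1) (2 * j) ∧
    y (2 * i - 1) (2 * j - 1) = y (2 * i - 1) (2 * i) * (1 - y (2 * j - 1) (2 * j)) := by
  obtain ⟨hLOP, hface⟩ := hy
  obtain ⟨h₁, h₂, h₃⟩ := hface i j hi hij hjn
  -- `2j-1` precedes `2i`, so it precedes `2i-1` too if block `i` is reversed
  have hrev : y (2 * i - 1) (2 * j - 1) ≤ y (2 * i - 1) (2 * i) := by
    simpa [h₁] using LOP.le_add hLOP (p := 2 * i - 1) (q := 2 * i) (r := 2 * j - 1)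
      (by omega) (by omega) (by omega) (by omega)
  have he₀ := LOP.nonneg hLOP (p := 2 * i - 1) (q := 2 * j - 1) (by omega) (by omega) (by omega)
  rcases LOP.eq_zero_or_eq_one hLOP (p := 2 * i - 1) (q := 2 * i) (by omega) (by omega) (by omega)
    with ha | ha <;>
  rcases LOP.eq_zero_or_eq_one hLOP (p := 2 * j - 1) (q := 2 * j) (by omega) (by omega) (by omega)
    with hb | hb <;>
  rcases LOP.eq_zero_or_eq_one hLOP (p := 2 * i) (q := 2 * j) (by omega) (by omega) (by omega)
    with hc | hc <;>
  rcases LOP.eq_zero_or_eq_one hLOP (p := 2 * i - 1) (q := 2 * j) (by omega) (by omega) (by omega)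
    with hd | hd <;>
  simp only [ha, hb, hc, hd] at h₂ h₃ hrev ⊢ <;>
  refine ⟨?_, ?_, ?_⟩ <;> linarith

end FaceF

theorem diagMap_mapsTo (n : ℕ) : Set.MapsTo (diagMap n) (FaceF n) (cube01 n) := by
  intro y hy
  refine ⟨fun i h => if_neg h, fun i hi hin => ?_⟩
  rw [diagMap, if_pos ⟨hi, hin⟩]
  exact LOP.eq_zero_or_eq_one hy.1 (by omega) (by omega) (by omega)

theorem diagMap_injOn (n : ℕ) : Set.InjOn (diagMap n) (FaceF n) := by
  intro y hy y' hy' h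
  have hdiag : ∀ i, 1 ≤ i → i ≤ n → y (2 * i - 1) (2 * i) = y' (2 * i - 1) (2 * i) := by
    intro i hi hin
    simpa only [diagMap, if_pos (And.intro hi hin)] using congrFun h i
  funext p q
  by_cases hpq : 1 ≤ p ∧ p < q ∧ q ≤ 2 * n
  swap
  · rw [hy.1.1 p q hpq, hy'.1.1 p q hpq]
  obtain ⟨i, hi, hin, hp⟩ := exists_block_index hpq.1 (by omega : p ≤ 2 * n)
  obtain ⟨j, hj, hjn, hq⟩ := exists_block_index (by omega : 1 ≤ q) hpq.2.2
  rcases (show i ≤ j by omega).eq_or_lt with rfl | hij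
  · obtain ⟨rfl, rfl⟩ : p = 2 * i - 1 ∧ q = 2 * i := by omega
    exact hdiag i hi hin
  obtain ⟨c₁, c₂, c₃⟩ := FaceF.cross_eq hy hi hij hjn
  obtain ⟨c₁', c₂', c₃'⟩ := FaceF.cross_eq hy' hi hij hjn
  rcases hp with rfl | rfl <;> rcases hq with rfl | rfl
  · rw [c₃, c₃', hdiag i hi hin, hdiag j hj hjn]
  · rw [c₂, c₂', hdiag i hi hin, hdiag j hj hjn]
  · rw [(hy.2 i j hi hij hjn).1, (hy'.2 i j hi hij hjn).1]
  · rw [c₁, c₁', hdiag i hi hin, hdiag j hj hjn]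

theorem diagMap_surjOn (n : ℕ) : Set.SurjOn (diagMap n) (FaceF n) (cube01 n) := by
  intro x hx
  refine ⟨faceVector n (fun i => decide (x i = 1)), faceVector_mem_FaceF n _, funext fun i => ?_⟩
  by_cases hi : 1 ≤ i ∧ i ≤ n
  · rw [diagMap_faceVector _ hi.1 hi.2]
    rcases hx.2 i hi.1 hi.2 with h | h <;> simp [h]
  · rw [diagMap, if_neg hi, hx.1 i hi]

theorem cube01_eq_image (n : ℕ) :
    cube01 n = (fun s : Finset ℕ => fun i => if i ∈ s then (1 : ℝ) else 0) ''
      ↑(Finset.Icc 1 n).powerset := by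
  ext x
  constructor
  · rintro ⟨hout, h01⟩
    refine ⟨(Finset.Icc 1 n).filter (fun i => x i = 1),
      Finset.mem_coe.mpr (Finset.mem_powerset.mpr (Finset.filter_subset _ _)), funext fun i => ?_⟩
    by_cases hi : 1 ≤ i ∧ i ≤ n
    · rcases h01 i hi.1 hi.2 with h | h <;> simp [h, hi.1, hi.2]
    · rw [hout i hi]
      simp only [Finset.mem_filter, Finset.mem_Icc]
      exact if_neg fun h => hi h.1
  · rintro ⟨s, hs, rfl⟩
    have hs : s ⊆ Finset.Icc 1 n := Finset.mem_powerset.mp (Finset.mem_coe.mp hs)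
    refine ⟨fun i hi => if_neg fun h => hi (by simpa using hs h), fun i _ _ => ?_⟩
    dsimp only
    split_ifs <;> simp

theorem ncard_cube01 (n : ℕ) : (cube01 n).ncard = 2 ^ n := by
  have hinj : Function.Injective fun s : Finset ℕ => fun i => if i ∈ s then (1 : ℝ) else 0 := by
    intro s t h
    ext i
    have hi := congrFun h i
    by_cases hs : i ∈ s <;> by_cases ht : i ∈ t <;> simp [hs, ht] at hi ⊢
  rw [cube01_eq_image, Set.ncard_image_of_injective _ hinj, Set.ncard_coe_finset,
    Finset.card_powerset, Nat.card_Icc, Nat.add_sub_cancel]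

/-- the map `y ↦ (y 1 2, y 3 4, …, y (2n-1) (2n))` is a bijection
from `F` onto `{0,1}^n`; in particular `F` has exactly `2 ^ n` elements. -/
theorem faceF_diag_bijection (n : ℕ) :
    Set.BijOn (diagMap n) (FaceF n) (cube01 n) ∧ (FaceF n).ncard = 2 ^ n := by
  have hbij : Set.BijOn (diagMap n) (FaceF n) (cube01 n) :=
    ⟨diagMap_mapsTo n, diagMap_injOn n, diagMap_surjOn n⟩
  refine ⟨hbij, ?_⟩
  rw [← ncard_cube01 n, ← hbij.image_eq, hbij.injOn.ncard_image]
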